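/- Let F be a field and I = (X^4, X^3Y, XY^3, Y^4) in F[X,Y]. Then the Ratliff-Rush closure of I equals (X,Y)^4, i.e. ⋃_{k≥0} (I^{k+1} : I^k) = (X,Y)^4 (so I is not Ratliff-Rush closed), and for every n ≥ 2 one has I^n = (X,Y)^{4n} (so every power I^n with n ≥ 2 is Ratliff-Rush closed). -/

import Mathlib

/-!
Write `𝔪 = (X, Y)`. Every monomial of degree `8` is a product of two of the generators of `I`,
so `I² = 𝔪⁸`, and every monomial of degree at least `7` is divisible by `X⁴` or `Y⁴`, so
`𝔪^(d+4) = I 𝔪^d` for `d ≥ 3`; hence `Iⁿ = 𝔪^(4n)` for `n ≥ 2`. Then `𝔪⁴ I ⊆ 𝔪⁸ = I²` puts `𝔪⁴`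
into the Ratliff-Rush closure of `I`, although `X²Y² ∈ 𝔪⁴ \ I`. Conversely, if `f Iᵏ ⊆ I^(n+k)`
then `f X^(4k) ∈ 𝔪^(4n+4k)`, and cancelling `X^(4k)` degree-wise gives `f ∈ 𝔪^(4n)`.
-/

/-- The Ratliff-Rush closure of the power `I^n`:  `⋃_{k≥0} (I^{n+k} : I^k)`. -/
noncomputable def rrPow {R : Type*} [CommRing R] (I : Ideal R) (n : ℕ) : Ideal R :=
  ⨆ k : ℕ, (I ^ (n + k)).colon ((I ^ k : Ideal R) : Set R)

open MvPolynomial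

section RatliffRush

variable {R : Type*} [CommRing R] {I J : Ideal R} {n : ℕ}

theorem le_rrPow_of_mul_pow_le (k : ℕ) (h : J * I ^ k ≤ I ^ (n + k)) : J ≤ rrPow I n :=
  le_iSup_of_le k fun _ hf => Submodule.mem_colon.mpr fun _ hp => h (Ideal.mul_mem_mul hf hp)

theorem pow_le_rrPow (I : Ideal R) (n : ℕ) : I ^ n ≤ rrPow I n :=
  le_rrPow_of_mul_pow_le 0 (by simp)

theorem rrPow_le_of_mul_pow_mem {x : R} (hx : x ∈ I)
    (h : ∀ k f, f * x ^ k ∈ I ^ (n + k) → f ∈ J) : rrPow I n ≤ J :=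
  iSup_le fun k f hf => h k f (Submodule.mem_colon.mp hf _ (Ideal.pow_mem_pow hx k))

end RatliffRush

namespace MvPolynomial

variable {σ R : Type*} [CommSemiring R]

theorem X_pow_mul_X_pow_eq_monomial (i j : σ) (a b : ℕ) :
    (X i ^ a * X j ^ b : MvPolynomial σ R) =
      monomial (Finsupp.single i a + Finsupp.single j b) 1 := by
  rw [X_pow_eq_monomial, X_pow_eq_monomial, monomial_mul, mul_one]

theorem monomial_one_eq_X_pow_mul_X_pow (s : Fin 2 →₀ ℕ) :
    monomial s (1 : R) = X 0 ^ s 0 * X 1 ^ s 1 := by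
  simp [monomial_eq, Finsupp.prod_fintype, Fin.prod_univ_two]

theorem span_X_zero_X_one : Ideal.span {X 0, X 1} = idealOfVars (Fin 2) R := by
  congr 1
  ext p
  simp [Fin.exists_fin_two, eq_comm]

theorem X_pow_mul_X_pow_mem_pow_idealOfVars (i j : σ) (a b : ℕ) :
    (X i ^ a * X j ^ b : MvPolynomial σ R) ∈ idealOfVars σ R ^ (a + b) := by
  rw [pow_add]
  exact Ideal.mul_mem_mul (Ideal.pow_mem_pow (Ideal.subset_span (Set.mem_range_self i)) a)
    (Ideal.pow_mem_pow (Ideal.subset_span (Set.mem_range_self j)) b)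

theorem mem_pow_idealOfVars_of_mul_X_pow_mem {f : MvPolynomial σ R} {i : σ} {d j : ℕ}
    (h : f * X i ^ j ∈ idealOfVars σ R ^ (d + j)) : f ∈ idealOfVars σ R ^ d := by
  rw [mem_pow_idealOfVars_iff] at h ⊢
  intro s hs
  have hshift : s + Finsupp.single i j ∈ (f * X i ^ j).support := by
    rwa [mem_support_iff, X_pow_eq_monomial, coeff_mul_monomial, mul_one, ← mem_support_iff]
  simpa using h _ hshift

theorem pow_idealOfVars_fin_two_le_iff {J : Ideal (MvPolynomial (Fin 2) R)} {d : ℕ} :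
    idealOfVars (Fin 2) R ^ d ≤ J ↔ ∀ a b, a + b = d → X 0 ^ a * X 1 ^ b ∈ J := by
  refine ⟨fun hJ a b hab => hJ (hab ▸ X_pow_mul_X_pow_mem_pow_idealOfVars 0 1 a b),
    fun h => ?_⟩
  rw [pow_idealOfVars_eq_span, Ideal.span_le]
  rintro _ ⟨s, hs, rfl⟩
  simp only [SetLike.mem_coe, monomial_one_eq_X_pow_mul_X_pow]
  exact h _ _ (by simpa [Finsupp.degree_eq_sum] using hs)

end MvPolynomial

section GapIdeal

variable (R : Type*) [CommSemiring R]

noncomputable def gapIdeal : Ideal (MvPolynomial (Fin 2) R) :=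
  Ideal.span {X 0 ^ 4, X 0 ^ 3 * X 1, X 0 * X 1 ^ 3, X 1 ^ 4}

variable {R}

local notation "𝔪" => idealOfVars (Fin 2) R

theorem gapIdeal_le : gapIdeal R ≤ 𝔪 ^ 4 := by
  rw [gapIdeal, Ideal.span_le]
  rintro _ (rfl | rfl | rfl | rfl)
  · simpa using X_pow_mul_X_pow_mem_pow_idealOfVars (R := R) 0 1 4 0
  · simpa using X_pow_mul_X_pow_mem_pow_idealOfVars (R := R) 0 1 3 1
  · simpa using X_pow_mul_X_pow_mem_pow_idealOfVars (R := R) 0 1 1 3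
  · simpa using X_pow_mul_X_pow_mem_pow_idealOfVars (R := R) 0 1 0 4

theorem gapIdeal_pow_le (n : ℕ) : gapIdeal R ^ n ≤ 𝔪 ^ (4 * n) := by
  rw [pow_mul]
  exact Ideal.pow_right_mono gapIdeal_le n

theorem gapIdeal_gens_mem :
    X 0 ^ 4 ∈ gapIdeal R ∧ X 0 ^ 3 * X 1 ∈ gapIdeal R ∧
      X 0 * X 1 ^ 3 ∈ gapIdeal R ∧ X 1 ^ 4 ∈ gapIdeal R := by
  refine ⟨?_, ?_, ?_, ?_⟩ <;> exact Ideal.subset_span (by simp)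

theorem pow_idealOfVars_eight_le_gapIdeal_sq : 𝔪 ^ 8 ≤ gapIdeal R ^ 2 := by
  obtain ⟨g₁, g₂, g₃, g₄⟩ := gapIdeal_gens_mem (R := R)
  have mem_sq {p q r : MvPolynomial (Fin 2) R} (hp : p ∈ gapIdeal R) (hq : q ∈ gapIdeal R)
      (h : p * q = r) : r ∈ gapIdeal R ^ 2 :=
    h ▸ (pow_two (gapIdeal R)).symm ▸ Ideal.mul_mem_mul hp hq
  refine pow_idealOfVars_fin_two_le_iff.mpr fun a b hab => ?_
  obtain rfl : b = 8 - a := by omega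
  have ha : a ≤ 8 := by omega
  interval_cases a
  · exact mem_sq g₄ g₄ (by ring)
  · exact mem_sq g₃ g₄ (by ring)
  · exact mem_sq g₃ g₃ (by ring)
  · exact mem_sq g₂ g₄ (by ring)
  · exact mem_sq g₁ g₄ (by ring)
  · exact mem_sq g₁ g₃ (by ring)
  · exact mem_sq g₂ g₂ (by ring)
  · exact mem_sq g₁ g₂ (by ring)
  · exact mem_sq g₁ g₁ (by ring)

theorem pow_idealOfVars_add_four_le_gapIdeal_mul {d : ℕ} (hd : 3 ≤ d) :
    𝔪 ^ (d + 4) ≤ gapIdeal R * 𝔪 ^ d := by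
  obtain ⟨g₁, -, -, g₄⟩ := gapIdeal_gens_mem (R := R)
  refine pow_idealOfVars_fin_two_le_iff.mpr fun a b hab => ?_
  rcases le_or_gt 4 a with ha | ha
  · obtain ⟨c, rfl⟩ := Nat.exists_eq_add_of_le ha
    rw [pow_add, mul_assoc]
    exact Ideal.mul_mem_mul g₁ (by simpa [show c + b = d by omega] using
      X_pow_mul_X_pow_mem_pow_idealOfVars (R := R) 0 1 c b)
  · obtain ⟨c, rfl⟩ := Nat.exists_eq_add_of_le (show 4 ≤ b by omega)
    rw [pow_add, mul_left_comm]
    exact Ideal.mul_mem_mul g₄ (by simpa [show a + c = d by omega] using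
      X_pow_mul_X_pow_mem_pow_idealOfVars (R := R) 0 1 a c)

theorem gapIdeal_pow {n : ℕ} (hn : 2 ≤ n) : gapIdeal R ^ n = 𝔪 ^ (4 * n) := by
  refine le_antisymm (gapIdeal_pow_le n) ?_
  induction n, hn using Nat.le_induction with
  | base => exact pow_idealOfVars_eight_le_gapIdeal_sq
  | succ n hn ih =>
    calc 𝔪 ^ (4 * (n + 1)) = 𝔪 ^ (4 * n + 4) := by ring_nf
      _ ≤ gapIdeal R * 𝔪 ^ (4 * n) := pow_idealOfVars_add_four_le_gapIdeal_mul (by omega)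
      _ ≤ gapIdeal R * gapIdeal R ^ n := Ideal.mul_mono_right ih
      _ = gapIdeal R ^ (n + 1) := (pow_succ' _ _).symm

end GapIdeal

section RatliffRushGapIdeal

variable {R : Type*} [CommRing R]

local notation "𝔪" => idealOfVars (Fin 2) R

theorem rrPow_gapIdeal_le (n : ℕ) : rrPow (gapIdeal R) n ≤ 𝔪 ^ (4 * n) := by
  refine rrPow_le_of_mul_pow_mem gapIdeal_gens_mem.1 fun k f hf => ?_
  refine mem_pow_idealOfVars_of_mul_X_pow_mem (i := 0) (j := 4 * k) ?_
  rw [pow_mul, ← mul_add]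
  exact gapIdeal_pow_le _ hf

theorem pow_idealOfVars_four_le_rrPow_gapIdeal : 𝔪 ^ 4 ≤ rrPow (gapIdeal R) 1 :=
  le_rrPow_of_mul_pow_le 1 <|
    calc 𝔪 ^ 4 * gapIdeal R ^ 1 ≤ 𝔪 ^ 4 * 𝔪 ^ 4 :=
          Ideal.mul_mono_right (by simpa using gapIdeal_le)
      _ = 𝔪 ^ 8 := by rw [← pow_add]
      _ ≤ gapIdeal R ^ (1 + 1) := pow_idealOfVars_eight_le_gapIdeal_sq

theorem X_sq_mul_X_sq_notMem_gapIdeal [Nontrivial R] : X 0 ^ 2 * X 1 ^ 2 ∉ gapIdeal R := by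
  -- the polynomials supported on exponents not dividing `X²Y²` form an ideal containing `I`
  let J : Ideal (MvPolynomial (Fin 2) R) :=
    restrictSupportIdeal R {s : Fin 2 →₀ ℕ | 2 < s 0 ∨ 2 < s 1} fun s t hst hs => by
      have := hst 0; have := hst 1; grind
  have mem_J (a b : ℕ) : X 0 ^ a * X 1 ^ b ∈ J ↔ 2 < a ∨ 2 < b := by
    rw [X_pow_mul_X_pow_eq_monomial]
    exact (monomial_mem_restrictSupport (R := R)).trans (by simp)
  have hle : gapIdeal R ≤ J := by
    rw [gapIdeal, Ideal.span_le]
    rintro _ (rfl | rfl | rfl | rfl)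
    · simpa using (mem_J 4 0).mpr (by norm_num)
    · simpa using (mem_J 3 1).mpr (by norm_num)
    · simpa using (mem_J 1 3).mpr (by norm_num)
    · simpa using (mem_J 0 4).mpr (by norm_num)
  exact fun h => by simpa using (mem_J 2 2).mp (hle h)

end RatliffRushGapIdeal

/-- For `I = (X^4, X^3Y, XY^3, Y^4)` in `F[X,Y]`: `~I = (X,Y)^4` (so `I` is not
Ratliff-Rush closed), and `I^n = (X,Y)^{4n}` for every `n ≥ 2` (so every power `I^n`
with `n ≥ 2` is Ratliff-Rush closed). -/
theorem stmt_16 (F : Type*) [Field F]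
    (X Y : MvPolynomial (Fin 2) F)
    (hX : X = MvPolynomial.X 0) (hY : Y = MvPolynomial.X 1)
    (I : Ideal (MvPolynomial (Fin 2) F))
    (hI : I = Ideal.span {X ^ 4, X ^ 3 * Y, X * Y ^ 3, Y ^ 4}) :
    rrPow I 1 = Ideal.span {X, Y} ^ 4 ∧
    rrPow I 1 ≠ I ∧
    (∀ n : ℕ, 2 ≤ n → I ^ n = Ideal.span {X, Y} ^ (4 * n)) ∧
    (∀ n : ℕ, 2 ≤ n → rrPow I n = I ^ n) := by
  subst hX hY
  obtain rfl : I = gapIdeal F := hI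
  rw [span_X_zero_X_one]
  have hrr : rrPow (gapIdeal F) 1 = idealOfVars (Fin 2) F ^ 4 :=
    le_antisymm (rrPow_gapIdeal_le 1) pow_idealOfVars_four_le_rrPow_gapIdeal
  refine ⟨hrr, fun h => ?_, fun n => gapIdeal_pow, fun n hn => ?_⟩
  · apply X_sq_mul_X_sq_notMem_gapIdeal (R := F)
    rw [← h, hrr]
    exact X_pow_mul_X_pow_mem_pow_idealOfVars 0 1 2 2
  · exact le_antisymm ((rrPow_gapIdeal_le n).trans_eq (gapIdeal_pow hn).symm) (pow_le_rrPow _ n)
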